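/- Let C be a small category and J a Grothendieck topology on C. Then the following are equivalent: (i) for every object c of C and every sieve R on c, the sieve ¬R ⊔ ¬¬R is J-covering; (ii) for every presheaf E : Cᵒᵖ ⥤ Type and every subpresheaf A of E, the subpresheaf N(A) ⊔ N(N(A)) is J-dense in E. -/

import Mathlib

/-! The sieve `S^{N(A)}_(c,e)` is `¬S^A_(c,e)` and the sieve of a union of subpresheaves is the
union of their sieves, so (ii) at `(E, A, c, e)` is (i) for the sieve `S^A_(c,e)`. Conversely, a
sieve `R` on `c` is a subpresheaf of the representable presheaf `yoneda.obj c`, and `R` is its own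
sieve at the section `𝟙 c`. -/

open CategoryTheory CategoryTheory.GrothendieckTopology Opposite

universe u

namespace Stmt11

variable {C : Type u} [SmallCategory C]

/-- The pseudocomplement `¬R` of a sieve `R` on `c`: the sieve of morphisms `f` with
codomain `c` whose pullback sieve `f*(R)` is empty. -/
def negSieve {c : C} (R : Sieve c) : Sieve c where
  arrows := fun _ f => R.pullback f = ⊥
  downward_closed := by
    intro d e f hf g
    rw [Sieve.pullback_comp, hf]
    exact le_antisymm (fun Y h hh => hh) bot_le

/-- The subpresheaf `N(A)` of `E`, whose sections at `c` are the sections `e ∈ E(c)` such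
that no restriction of `e` along any morphism lies in `A`. -/
def negSub (E : Cᵒᵖ ⥤ Type u) (A : Subfunctor E) : Subfunctor E where
  obj c := {e | ∀ (d : C) (f : d ⟶ unop c), E.map f.op e ∉ A.obj (op d)}
  map := by
    intro U V i e he d f hf
    apply he d (f ≫ i.unop)
    have : (f ≫ i.unop).op = i ≫ f.op := rfl
    rw [this, FunctorToTypes.map_comp_apply] at *
    exact hf

/-- The union `A ⊔ B` of two subpresheaves of `E`. -/
def unionSub (E : Cᵒᵖ ⥤ Type u) (A B : Subfunctor E) : Subfunctor E where
  obj c := A.obj c ∪ B.obj c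
  map := by
    intro U V i e he
    rcases he with h | h
    · exact Or.inl (A.map i h)
    · exact Or.inr (B.map i h)

def _root_.CategoryTheory.Sieve.toSubfunctor {D : Type*} [Category D] {c : D} (R : Sieve c) :
    Subfunctor (yoneda.obj c) where
  obj _ := {f | R f}
  map _ _ hf := R.downward_closed hf _

lemma _root_.CategoryTheory.Sieve.sieveOfSection_toSubfunctor_id {D : Type*} [Category D] {c : D}
    (R : Sieve c) : R.toSubfunctor.sieveOfSection (𝟙 c) = R := by
  ext d f
  change R (f ≫ 𝟙 c) ↔ R f
  rw [Category.comp_id]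

lemma sieveOfSection_negSub (E : Cᵒᵖ ⥤ Type u) (A : Subfunctor E) {c : Cᵒᵖ} (e : E.obj c) :
    (negSub E A).sieveOfSection e = negSieve (A.sieveOfSection e) := by
  ext d f
  change (∀ (d' : C) (g : d' ⟶ d), _) ↔ (A.sieveOfSection e).pullback f = ⊥
  simp only [← Functor.map_comp_apply, ← op_comp, eq_bot_iff]
  rfl

lemma sieveOfSection_unionSub (E : Cᵒᵖ ⥤ Type u) (A B : Subfunctor E) {c : Cᵒᵖ} (e : E.obj c) :
    (unionSub E A B).sieveOfSection e = A.sieveOfSection e ⊔ B.sieveOfSection e :=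
  rfl

lemma sieveOfSection_unionSub_negSub_negSub (E : Cᵒᵖ ⥤ Type u) (A : Subfunctor E) {c : Cᵒᵖ}
    (e : E.obj c) :
    (unionSub E (negSub E A) (negSub E (negSub E A))).sieveOfSection e =
      negSieve (A.sieveOfSection e) ⊔ negSieve (negSieve (A.sieveOfSection e)) := by
  rw [sieveOfSection_unionSub, sieveOfSection_negSub, sieveOfSection_negSub, sieveOfSection_negSub]

/-- `¬R ⊔ ¬¬R` is `J`-covering for every sieve `R` if and only if for every presheaf `E`
and every subpresheaf `A` of `E`, the subpresheaf `N(A) ⊔ N(N(A))` is `J`-dense in `E`,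
i.e. all the sieves `S^{N(A) ⊔ N(N(A))}_(c,e)` are `J`-covering. -/
theorem statement11 (J : GrothendieckTopology C) :
    (∀ (c : C) (R : Sieve c), negSieve R ⊔ negSieve (negSieve R) ∈ J c) ↔
    (∀ (E : Cᵒᵖ ⥤ Type u) (A : Subfunctor E) (c : C) (e : E.obj (op c)),
      (unionSub E (negSub E A) (negSub E (negSub E A))).sieveOfSection e ∈ J c) := by
  refine ⟨fun h E A c e => ?_, fun h c R => ?_⟩
  · rw [sieveOfSection_unionSub_negSub_negSub]
    exact h c _
  · simpa only [sieveOfSection_unionSub_negSub_negSub, Sieve.sieveOfSection_toSubfunctor_id] using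
      h (yoneda.obj c) R.toSubfunctor c (𝟙 c)

end Stmt11
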